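/- Let 𝒢 be a finite abelian group with character group 𝒢*. For a subgroup H ≤ 𝒢, an element h ∈ 𝒢/H, and a character α ∈ Hom(H, ℂ*), define the Saito-dual data: H̃ ≤ 𝒢* the dual subgroup, h̃ ∈ Hom(H̃, ℂ*) the character corresponding to h under 𝒢/H ≅ Hom(H̃, ℂ*), and α̃ ∈ 𝒢*/H̃ the class corresponding to α under Hom(H, ℂ*) ≅ 𝒢*/H̃. Then applying this duality construction twice (using the canonical identification 𝒢** ≅ 𝒢) returns the original data (H, h, α). -/
import Mathlib

/-- The dual subgroup of `K ≤ G` inside the character group `G →* ℂˣ`. -/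
def dualSubgroup {G : Type*} [CommGroup G] (K : Subgroup G) : Subgroup (G →* ℂˣ) where
  carrier := {γ | ∀ a ∈ K, γ a = 1}
  one_mem' := by intro a _; rfl
  mul_mem' := by intro γ δ hγ hδ a ha; simp [hγ a ha, hδ a ha]
  inv_mem' := by intro γ hγ a ha; simp [hγ a ha]

/-- The canonical evaluation homomorphism `𝒢 → 𝒢**`. -/
def evalHom (G : Type*) [CommGroup G] : G →* ((G →* ℂˣ) →* ℂˣ) where
  toFun g := { toFun := fun γ => γ g, map_one' := rfl, map_mul' := fun _ _ => rfl }
  map_one' := by ext γ; simp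
  map_mul' := by intro a b; ext γ; simp

/-- the enhanced Saito duality applied twice returns the original data.
Given `(H, h, α)` with `H ≤ 𝒢`, `h = [g] ∈ 𝒢/H` and `α ∈ Hom(H,ℂ*)` (represented by a
character `α̃` of `𝒢` extending it), the dual data is `(H̃, α̃ mod H̃, h̃)` where
`h̃ : H̃ → ℂ*` is evaluation at `g`; dualizing again and pulling back along `𝒢 ≅ 𝒢**`:
(1) the subgroup `(H̃)~` comes back to `H`;
(2) any character of `𝒢**`... i.e. any `Λ ∈ 𝒢**` extending the evaluation character
`h̃` of `H̃` agrees with `ev g` modulo `(H̃)~`, so the recovered class in `𝒢/H` is `[g]`;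
(3) any character `β` of `𝒢` agreeing with `α̃` on `H` (i.e. representing the same class
`α̃ mod H̃`) agrees with `α̃` modulo `H̃`, so the recovered character of `H` is `α`. -/
theorem saito_duality_involutive (𝒢 : Type*) [CommGroup 𝒢] [Finite 𝒢]
    (H : Subgroup 𝒢) (g : 𝒢) (αext : 𝒢 →* ℂˣ) :
    ((dualSubgroup (dualSubgroup H)).comap (evalHom 𝒢) = H) ∧
    (∀ Λ : (𝒢 →* ℂˣ) →* ℂˣ, (∀ γ ∈ dualSubgroup H, Λ γ = γ g) →
      Λ * (evalHom 𝒢 g)⁻¹ ∈ dualSubgroup (dualSubgroup H)) ∧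
    (∀ β : 𝒢 →* ℂˣ, (∀ x ∈ H, β x = αext x) →
      β * αext⁻¹ ∈ dualSubgroup H) := by
  refine ⟨?_, ?_, ?_⟩
  · ext x
    simp only [Subgroup.mem_comap]
    constructor
    · intro hx
      by_contra hxH
      -- find a character of 𝒢/H nontrivial at [x]
      have hne : (QuotientGroup.mk x : 𝒢 ⧸ H) ≠ 1 := by
        simpa [QuotientGroup.eq_one_iff] using hxH
      have : NeZero (Monoid.exponent (𝒢 ⧸ H)) :=
        ⟨Monoid.exponent_ne_zero_of_finite⟩
      obtain ⟨φ, hφ⟩ := CommGroup.exists_apply_ne_one_of_hasEnoughRootsOfUnity (𝒢 ⧸ H) ℂ hne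
      have hmem : φ.comp (QuotientGroup.mk' H) ∈ dualSubgroup H := by
        intro a ha
        simp [(QuotientGroup.eq_one_iff a).2 ha]
      exact hφ (hx _ hmem)
    · intro hx γ hγ
      exact hγ x hx
  · intro Λ hΛ γ hγ
    have := hΛ γ hγ
    simp [dualSubgroup, evalHom, this]
  · intro β hβ a ha
    simp [dualSubgroup, hβ a ha]
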